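/- Let (Ω,μ) be a measure space with μ(Ω) < ∞, let (Y,d) be a CAT(1) space, P ∈ Y, 0 < τ < π/4, and let f : Ω → Y be a measurable map with separable range such that d(f(x),P) ≤ τ for μ-a.e. x. Let Q, R ∈ Y with d(Q,P) ≤ τ and d(R,P) ≤ τ, and let M = ½Q + ½R be the midpoint of the geodesic from Q to R. Then (1/8)·cos(2τ)·d(Q,R)²·μ(Ω) ≤ ½·( ∫_Ω d²(f(x),R) dμ + ∫_Ω d²(f(x),Q) dμ ) − ∫_Ω d²(f(x),M) dμ. -/

import Mathlib

open scoped RealInnerProductSpace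

noncomputable def sphereDist (x y : EuclideanSpace ℝ (Fin 3)) : ℝ :=
  Real.arccos ⟪x, y⟫

open Classical in
noncomputable def sphereInterp (x y : EuclideanSpace ℝ (Fin 3)) (t : ℝ) :
    EuclideanSpace ℝ (Fin 3) :=
  if Real.sin (sphereDist x y) = 0 then x
  else (Real.sin ((1 - t) * sphereDist x y) / Real.sin (sphereDist x y)) • x
     + (Real.sin (t * sphereDist x y) / Real.sin (sphereDist x y)) • y

/-- A CAT(1) structure on a complete metric space `Y`: every pair of points at
distance `< π` is joined by a constant-speed minimizing geodesic
`t ↦ interp P Q t` (the point `(1-t)P + tQ`, at distance `t·d(P,Q)` from `P`),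
and every geodesic triangle of perimeter `< 2π` satisfies the CAT(1)
comparison inequality with respect to any comparison triangle on the unit
sphere `S² ⊂ ℝ³` (with the angular metric). -/
structure CAT1Space (Y : Type*) [MetricSpace Y] [CompleteSpace Y] where
  interp : Y → Y → ℝ → Y
  interp_zero : ∀ P Q : Y, dist P Q < Real.pi → interp P Q 0 = P
  interp_one : ∀ P Q : Y, dist P Q < Real.pi → interp P Q 1 = Q
  interp_dist : ∀ P Q : Y, dist P Q < Real.pi →
    ∀ s t : ℝ, s ∈ Set.Icc (0:ℝ) 1 → t ∈ Set.Icc (0:ℝ) 1 →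
      dist (interp P Q s) (interp P Q t) = |s - t| * dist P Q
  comparison : ∀ P Q R : Y,
    dist P Q + dist Q R + dist R P < 2 * Real.pi →
    ∀ p q r : EuclideanSpace ℝ (Fin 3), ‖p‖ = 1 → ‖q‖ = 1 → ‖r‖ = 1 →
      sphereDist p q = dist P Q → sphereDist q r = dist Q R →
      sphereDist r p = dist R P →
      ∀ s t : ℝ, s ∈ Set.Icc (0:ℝ) 1 → t ∈ Set.Icc (0:ℝ) 1 →
        dist (interp P Q t) (interp R Q s) ≤
          sphereDist (sphereInterp p q t) (sphereInterp r q s)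

open MeasureTheory

/-!
Fix `W = f x`. Applying the CAT(1) comparison in the triangle `Q R W` to the midpoint `M` of `QR`
and the vertex `W` bounds `c = d(W, M)` by the median of the spherical comparison triangle, which gives
`cos a + cos b ≤ 2 cos (θ / 2) cos c` for `a = d(R, W)`, `b = d(W, Q)`, `θ = d(Q, R)`.
Since `cos ∘ √` is convex on `[0, π²]`, the quadratic mean `m = √((a² + b²) / 2)` satisfies
`2 cos m ≤ cos a + cos b`; hence `c ≤ m` and
`cos (2τ) (1 - cos (θ / 2)) ≤ cos c - cos m ≤ (m² - c²) / 2`, while `1 - cos (θ / 2) ≥ θ² / 16`.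
Combining these gives the inequality pointwise, and it remains to integrate over `Ω`.
-/

open Real

theorem mul_sin_le_mul_sin_of_le {s t : ℝ} (hs : 0 ≤ s) (hst : s ≤ t) (ht : t ≤ π) :
    s * sin t ≤ t * sin s := by
  rcases (hs.trans hst).eq_or_lt with rfl | ht0
  · simp [le_antisymm hst hs]
  have hconc := strictConcaveOn_sin_Icc.concaveOn.2 (x := t) (y := 0) ⟨ht0.le, ht⟩
    ⟨le_rfl, pi_pos.le⟩ (div_nonneg hs ht0.le) (sub_nonneg.2 (div_le_one_of_le₀ hst ht0.le))
    (by ring)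
  simp only [smul_eq_mul, sin_zero, mul_zero, add_zero, div_mul_cancel₀ _ ht0.ne'] at hconc
  calc s * sin t = t * (s / t * sin t) := by field_simp
    _ ≤ t * sin s := by gcongr

theorem convexOn_cos_sqrt : ConvexOn ℝ (Set.Icc 0 (π ^ 2)) fun x => cos √x := by
  have hderiv : ∀ x ∈ Set.Ioo 0 (π ^ 2),
      HasDerivAt (fun x => cos √x) (-sin √x * (1 / (2 * √x))) x := fun x hx =>
    (hasDerivAt_sqrt hx.1.ne').cos
  refine MonotoneOn.convexOn_of_deriv (convex_Icc _ _) (by fun_prop) ?_ ?_ <;>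
    rw [interior_Icc]
  · exact fun x hx => (hderiv x hx).differentiableAt.differentiableWithinAt
  intro x hx y hy hxy
  rw [(hderiv x hx).deriv, (hderiv y hy).deriv]
  have hx0 : 0 < √x := sqrt_pos.2 hx.1
  have hy0 : 0 < √y := sqrt_pos.2 hy.1
  have hyπ : √y ≤ π := sqrt_le_iff.2 ⟨pi_pos.le, hy.2.le⟩
  -- the derivative is `-sin u / (2u)` with `u = √x`, and `sin u / u` decreases on `(0, π]`
  have := mul_sin_le_mul_sin_of_le hx0.le (sqrt_le_sqrt hxy) hyπ
  rw [neg_mul, neg_mul, neg_le_neg_iff, mul_one_div, mul_one_div,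
    div_le_div_iff₀ (by positivity) (by positivity)]
  nlinarith

theorem two_mul_cos_sqrt_le_cos_add_cos {a b : ℝ} (ha : 0 ≤ a) (haπ : a ≤ π) (hb : 0 ≤ b)
    (hbπ : b ≤ π) : 2 * cos √((a ^ 2 + b ^ 2) / 2) ≤ cos a + cos b := by
  have h := convexOn_cos_sqrt.2 (x := a ^ 2) (y := b ^ 2) ⟨by positivity, by gcongr⟩
    ⟨by positivity, by gcongr⟩ (by norm_num : (0 : ℝ) ≤ 1 / 2) (by norm_num : (0 : ℝ) ≤ 1 / 2)
    (by norm_num)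
  simp only [smul_eq_mul, sqrt_sq ha, sqrt_sq hb] at h
  rw [show 1 / 2 * a ^ 2 + 1 / 2 * b ^ 2 = (a ^ 2 + b ^ 2) / 2 by ring] at h
  linarith

theorem cos_sub_cos_le_abs_sq_sub_sq (x y : ℝ) : cos x - cos y ≤ |y ^ 2 - x ^ 2| / 2 := by
  have h₁ := abs_sin_le_abs (x := (x + y) / 2)
  have h₂ := abs_sin_le_abs (x := (x - y) / 2)
  calc cos x - cos y = -2 * sin ((x + y) / 2) * sin ((x - y) / 2) := cos_sub_cos x y
    _ ≤ 2 * (|sin ((x + y) / 2)| * |sin ((x - y) / 2)|) := by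
      rw [neg_mul, neg_mul, ← abs_mul]
      linarith [neg_abs_le (sin ((x + y) / 2) * sin ((x - y) / 2))]
    _ ≤ 2 * (|(x + y) / 2| * |(x - y) / 2|) := by gcongr
    _ = |y ^ 2 - x ^ 2| / 2 := by
      rw [← abs_mul, ← abs_neg, show -((x + y) / 2 * ((x - y) / 2)) = (y ^ 2 - x ^ 2) / 4 by ring,
        abs_div, abs_of_pos (by norm_num : (0 : ℝ) < 4)]
      ring

theorem sq_div_four_le_one_sub_cos {x : ℝ} (hx : |x| ≤ 1) : x ^ 2 / 4 ≤ 1 - cos x := by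
  have hbound := (abs_le.1 (cos_bound hx)).2
  have hx4 : |x| ^ 4 ≤ x ^ 2 := by
    have hx2 : x ^ 2 ≤ 1 := by rw [← sq_abs]; exact pow_le_one₀ (abs_nonneg x) hx
    rw [show |x| ^ 4 = x ^ 2 * x ^ 2 by rw [← sq_abs x]; ring]
    exact mul_le_of_le_one_right (sq_nonneg x) hx2
  nlinarith

theorem cos_mul_sq_div_eight_le_of_cos_add_cos_le {ρ a b θ c : ℝ} (hρ : ρ ≤ π / 2)
    (ha : 0 ≤ a) (haρ : a ≤ ρ) (hb : 0 ≤ b) (hbρ : b ≤ ρ) (hθ : 0 ≤ θ) (hθρ : θ ≤ ρ)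
    (hc : 0 ≤ c) (hcπ : c ≤ π) (hmedian : cos a + cos b ≤ 2 * cos (θ / 2) * cos c) :
    cos ρ * θ ^ 2 / 8 ≤ (a ^ 2 + b ^ 2) / 2 - c ^ 2 := by
  have hρ0 : 0 ≤ ρ := ha.trans haρ
  have hcosρ : 0 ≤ cos ρ := cos_nonneg_of_mem_Icc ⟨by linarith [pi_pos], hρ⟩
  have hθ2 : 0 < cos (θ / 2) := cos_pos_of_mem_Ioo ⟨by linarith [pi_pos], by linarith [pi_pos]⟩
  set m := √((a ^ 2 + b ^ 2) / 2) with hm_def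
  have hm2 : m ^ 2 = (a ^ 2 + b ^ 2) / 2 := sq_sqrt (by positivity)
  have hmρ : m ≤ ρ := sqrt_le_iff.2 ⟨hρ0, by nlinarith⟩
  have hcosm : cos ρ ≤ cos m :=
    cos_le_cos_of_nonneg_of_le_pi (sqrt_nonneg _) (by linarith [pi_pos]) hmρ
  have hm_median : cos m ≤ cos (θ / 2) * cos c := by
    linarith [two_mul_cos_sqrt_le_cos_add_cos ha (by linarith) hb (by linarith)]
  have hcosc : 0 ≤ cos c := nonneg_of_mul_nonneg_right (by linarith) hθ2
  have hmc : cos m ≤ cos c := by nlinarith [cos_le_one (θ / 2)]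
  have hcm : c ≤ m := by
    by_contra! h
    linarith [cos_lt_cos_of_nonneg_of_le_pi (sqrt_nonneg _) hcπ h]
  have hgap : cos ρ * (1 - cos (θ / 2)) ≤ cos c - cos m := by
    nlinarith [cos_le_one (θ / 2)]
  have hsq : cos c - cos m ≤ (m ^ 2 - c ^ 2) / 2 := by
    simpa only [abs_of_nonneg (sub_nonneg.2 (pow_le_pow_left₀ hc hcm 2))]
      using cos_sub_cos_le_abs_sq_sub_sq c m
  have hθ1 : |θ / 2| ≤ 1 := by
    rw [abs_of_nonneg (by positivity)]
    linarith [pi_lt_d2]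
  calc cos ρ * θ ^ 2 / 8 = 2 * (cos ρ * ((θ / 2) ^ 2 / 4)) := by ring
    _ ≤ 2 * (cos ρ * (1 - cos (θ / 2))) := by gcongr; exact sq_div_four_le_one_sub_cos hθ1
    _ ≤ m ^ 2 - c ^ 2 := by linarith
    _ = (a ^ 2 + b ^ 2) / 2 - c ^ 2 := by rw [hm2]

theorem cos_sphereDist {x y : EuclideanSpace ℝ (Fin 3)} (hx : ‖x‖ = 1) (hy : ‖y‖ = 1) :
    cos (sphereDist x y) = ⟪x, y⟫ := by
  have h := abs_real_inner_le_norm x y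
  rw [hx, hy, one_mul] at h
  exact cos_arccos (abs_le.1 h).1 (abs_le.1 h).2

theorem sphereDist_comm (x y : EuclideanSpace ℝ (Fin 3)) : sphereDist x y = sphereDist y x := by
  rw [sphereDist, sphereDist, real_inner_comm]

theorem sphereInterp_zero (x y : EuclideanSpace ℝ (Fin 3)) : sphereInterp x y 0 = x := by
  unfold sphereInterp
  split_ifs with h
  · rfl
  · simp [h]

theorem sphereInterp_half {x y : EuclideanSpace ℝ (Fin 3)} (h : sin (sphereDist x y) ≠ 0) :
    sphereInterp x y (1 / 2) = (2 * cos (sphereDist x y / 2))⁻¹ • (x + y) := by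
  set d := sphereDist x y
  have hsin := sin_two_mul (d / 2)
  rw [mul_div_cancel₀ d two_ne_zero] at hsin
  have hsin2 : sin (d / 2) ≠ 0 := fun h0 => h (by rw [hsin, h0]; ring)
  have hcos2 : cos (d / 2) ≠ 0 := fun h0 => h (by rw [hsin, h0]; ring)
  rw [sphereInterp, if_neg h, smul_add, show (1 - 1 / 2) * d = d / 2 by ring,
    show 1 / 2 * d = d / 2 by ring, hsin]
  congr 2 <;> field_simp

/-- The spherical median formula. -/
theorem two_mul_cos_mul_cos_sphereDist_sphereInterp_half {x y z : EuclideanSpace ℝ (Fin 3)}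
    (hx : ‖x‖ = 1) (hy : ‖y‖ = 1) (hz : ‖z‖ = 1) (hxy : sin (sphereDist x y) ≠ 0) :
    2 * cos (sphereDist x y / 2) * cos (sphereDist (sphereInterp x y (1 / 2)) z) =
      ⟪x, z⟫ + ⟪y, z⟫ := by
  set d := sphereDist x y
  have hcos2 : cos (d / 2) ≠ 0 := by
    refine fun h0 => hxy ?_
    rw [show d = 2 * (d / 2) by ring, sin_two_mul, h0, mul_zero]
  have hxy_sq : ‖x + y‖ ^ 2 = (2 * cos (d / 2)) ^ 2 := by
    rw [norm_add_sq_real, hx, hy, ← cos_sphereDist hx hy, mul_pow, cos_sq,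
      mul_div_cancel₀ d two_ne_zero]
    ring
  have hmid : ‖sphereInterp x y (1 / 2)‖ = 1 := by
    refine (pow_left_inj₀ (norm_nonneg _) zero_le_one two_ne_zero).1 ?_
    rw [sphereInterp_half hxy, norm_smul, mul_pow, hxy_sq, norm_inv, norm_eq_abs, inv_pow, sq_abs,
      inv_mul_cancel₀ (pow_ne_zero 2 (mul_ne_zero two_ne_zero hcos2)), one_pow]
  rw [cos_sphereDist hmid hz, sphereInterp_half hxy, real_inner_smul_left, inner_add_left,
    ← mul_assoc, mul_inv_cancel₀ (mul_ne_zero two_ne_zero hcos2), one_mul]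

theorem sphereDist_eq_of_inner_eq_cos {u v : EuclideanSpace ℝ (Fin 3)} {d : ℝ} (hd : 0 ≤ d)
    (hdπ : d ≤ π) (h : ⟪u, v⟫ = cos d) : sphereDist u v = d := by
  rw [sphereDist, h, arccos_cos hd hdπ]

theorem abs_cos_sub_cos_mul_cos_le_sin_mul_sin {d₁ d₂ d₃ : ℝ} (h₂ : 0 ≤ d₂)
    (h₁₂₃ : d₁ ≤ d₂ + d₃) (h₂₁₃ : d₂ ≤ d₁ + d₃) (h₃₁₂ : d₃ ≤ d₁ + d₂)
    (hper : d₁ + d₂ + d₃ < 2 * π) :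
    |cos d₂ - cos d₁ * cos d₃| ≤ sin d₁ * sin d₃ := by
  refine abs_le.2 ⟨?_, ?_⟩
  · have : cos (d₁ + d₃) ≤ cos d₂ := by
      rcases le_total (d₁ + d₃) π with h | h
      · exact cos_le_cos_of_nonneg_of_le_pi h₂ h h₂₁₃
      · rw [← cos_two_pi_sub]
        exact cos_le_cos_of_nonneg_of_le_pi h₂ (by linarith) (by linarith)
    linarith [cos_add d₁ d₃]
  · have : cos d₂ ≤ cos (d₁ - d₃) := by
      rw [← cos_abs (d₁ - d₃)]
      exact cos_le_cos_of_nonneg_of_le_pi (abs_nonneg _) (by linarith)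
        (abs_sub_le_iff.2 ⟨by linarith, by linarith⟩)
    linarith [cos_sub d₁ d₃]

theorem exists_sphere_comparison_triangle {d₁ d₂ d₃ : ℝ} (h₁ : 0 < d₁) (h₂ : 0 ≤ d₂) (h₃ : 0 ≤ d₃)
    (h₁₂₃ : d₁ ≤ d₂ + d₃) (h₂₁₃ : d₂ ≤ d₁ + d₃) (h₃₁₂ : d₃ ≤ d₁ + d₂)
    (hper : d₁ + d₂ + d₃ < 2 * π) :
    ∃ p q r : EuclideanSpace ℝ (Fin 3), ‖p‖ = 1 ∧ ‖q‖ = 1 ∧ ‖r‖ = 1 ∧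
      sphereDist p q = d₁ ∧ sphereDist q r = d₂ ∧ sphereDist r p = d₃ := by
  have hsin₁ : 0 < sin d₁ := sin_pos_of_pos_of_lt_pi h₁ (by linarith)
  -- `p = e₁`, `q` in the `e₁e₂`-plane, and `r = (cos d₃, x, y)` with `x` forced by `⟪q, r⟫ = cos d₂`
  set x := (cos d₂ - cos d₁ * cos d₃) / sin d₁ with hx
  have hx_sq : x ^ 2 ≤ sin d₃ ^ 2 := by
    have := abs_cos_sub_cos_mul_cos_le_sin_mul_sin h₂ h₁₂₃ h₂₁₃ h₃₁₂ hper
    rw [hx, div_pow, div_le_iff₀ (by positivity)]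
    nlinarith [sq_abs (cos d₂ - cos d₁ * cos d₃), abs_nonneg (cos d₂ - cos d₁ * cos d₃)]
  set y := √(sin d₃ ^ 2 - x ^ 2)
  have hy : y ^ 2 = sin d₃ ^ 2 - x ^ 2 := sq_sqrt (by linarith)
  have inner_eq (a b c a' b' c' : ℝ) :
      ⟪!₂[a, b, c], !₂[a', b', c']⟫ = a * a' + b * b' + c * c' := by
    simp [PiLp.inner_apply, Fin.sum_univ_three]
    ring
  have norm_eq (a b c : ℝ) (h : a ^ 2 + b ^ 2 + c ^ 2 = 1) : ‖!₂[a, b, c]‖ = 1 := by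
    simp [EuclideanSpace.norm_eq, Fin.sum_univ_three, h]
  refine ⟨!₂[1, 0, 0], !₂[cos d₁, sin d₁, 0], !₂[cos d₃, x, y],
    norm_eq _ _ _ (by norm_num), norm_eq _ _ _ (by linarith [sin_sq_add_cos_sq d₁]),
    norm_eq _ _ _ (by linarith [sin_sq_add_cos_sq d₃]), ?_, ?_, ?_⟩
  · exact sphereDist_eq_of_inner_eq_cos h₁.le (by linarith) (by rw [inner_eq]; ring)
  · refine sphereDist_eq_of_inner_eq_cos h₂ (by linarith) ?_
    rw [inner_eq, hx]
    field_simp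
    ring
  · exact sphereDist_eq_of_inner_eq_cos h₃ (by linarith) (by rw [inner_eq]; ring)

namespace CAT1Space

variable {Y : Type*} [MetricSpace Y] [CompleteSpace Y] (H : CAT1Space Y)

theorem dist_interp_half {Q R : Y} (h : dist Q R < π) :
    dist Q (H.interp Q R (1 / 2)) = dist Q R / 2 := by
  have := H.interp_dist Q R h 0 (1 / 2) ⟨le_rfl, zero_le_one⟩ ⟨by norm_num, by norm_num⟩
  rw [H.interp_zero Q R h] at this
  rw [this]
  norm_num
  ring

theorem cos_add_cos_le_cos_dist_interp_half {Q R W : Y} (hQR : 0 < dist Q R)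
    (hper : dist Q R + dist R W + dist W Q < 2 * π) :
    cos (dist R W) + cos (dist W Q) ≤
      2 * cos (dist Q R / 2) * cos (dist W (H.interp Q R (1 / 2))) := by
  have h₁₂₃ : dist Q R ≤ dist R W + dist W Q := by
    linarith [dist_triangle Q W R, dist_comm Q W, dist_comm W R]
  have h₂₁₃ : dist R W ≤ dist Q R + dist W Q := by
    linarith [dist_triangle R Q W, dist_comm R Q, dist_comm Q W]
  have h₃₁₂ : dist W Q ≤ dist Q R + dist R W := by
    linarith [dist_triangle W R Q, dist_comm W R, dist_comm R Q]
  obtain ⟨p, q, r, hp, hq, hr, hpq, hqr, hrp⟩ :=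
    exists_sphere_comparison_triangle hQR dist_nonneg dist_nonneg h₁₂₃ h₂₁₃ h₃₁₂ hper
  have hWR : dist W R < π := by linarith [dist_comm W R]
  have hcomp := H.comparison Q R W hper p q r hp hq hr hpq hqr hrp 0 (1 / 2)
    ⟨le_rfl, zero_le_one⟩ ⟨by norm_num, by norm_num⟩
  rw [H.interp_zero W R hWR, sphereInterp_zero, dist_comm] at hcomp
  have hsin : sin (sphereDist p q) ≠ 0 := by
    rw [hpq]
    exact (sin_pos_of_pos_of_lt_pi hQR (by linarith)).ne'
  have hmedian := two_mul_cos_mul_cos_sphereDist_sphereInterp_half hp hq hr hsin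
  rw [← cos_sphereDist hp hr, ← cos_sphereDist hq hr, hpq, hqr, sphereDist_comm p r, hrp] at hmedian
  have hcos : cos (sphereDist (sphereInterp p q (1 / 2)) r) ≤ cos (dist W (H.interp Q R (1 / 2))) :=
    cos_le_cos_of_nonneg_of_le_pi dist_nonneg (arccos_le_pi _) hcomp
  have hθ : 0 < cos (dist Q R / 2) := cos_pos_of_mem_Ioo
    ⟨by linarith [pi_pos], by linarith⟩
  calc cos (dist R W) + cos (dist W Q)
      = 2 * cos (dist Q R / 2) * cos (sphereDist (sphereInterp p q (1 / 2)) r) := by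
        rw [hmedian, add_comm]
    _ ≤ 2 * cos (dist Q R / 2) * cos (dist W (H.interp Q R (1 / 2))) := by gcongr

theorem cos_mul_sq_div_eight_le {Q R W : Y} {ρ : ℝ} (hρ : ρ ≤ π / 2) (hQR : dist Q R ≤ ρ)
    (hRW : dist R W ≤ ρ) (hWQ : dist W Q ≤ ρ) :
    cos ρ * dist Q R ^ 2 / 8 ≤
      (dist W R ^ 2 + dist W Q ^ 2) / 2 - dist W (H.interp Q R (1 / 2)) ^ 2 := by
  have hπ : dist Q R < π := by linarith [pi_pos]
  rcases (dist_nonneg (x := Q) (y := R)).eq_or_lt with hQR0 | hQR0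
  · have hRQ : R = Q := dist_eq_zero.1 (by rw [dist_comm]; exact hQR0.symm)
    have hM : H.interp Q R (1 / 2) = Q := by
      rw [eq_comm, ← dist_eq_zero, H.dist_interp_half hπ, ← hQR0, zero_div]
    rw [hM, ← hQR0, hRQ]
    simp
  have hWM : dist W (H.interp Q R (1 / 2)) ≤ π := by
    linarith [dist_triangle W Q (H.interp Q R (1 / 2)), H.dist_interp_half hπ]
  rw [dist_comm W R]
  exact cos_mul_sq_div_eight_le_of_cos_add_cos_le hρ dist_nonneg hRW dist_nonneg hWQ dist_nonneg
    hQR dist_nonneg hWM (H.cos_add_cos_le_cos_dist_interp_half hQR0 (by linarith [pi_pos]))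

end CAT1Space

theorem integrable_dist_sq {Ω Y : Type*} [MeasurableSpace Ω] [MetricSpace Y] {μ : Measure Ω}
    [IsFiniteMeasure μ] {f : Ω → Y} (hf : AEStronglyMeasurable f μ) {P : Y} {r : ℝ}
    (hbound : ∀ᵐ x ∂μ, dist (f x) P ≤ r) (y : Y) :
    Integrable (fun x => dist (f x) y ^ 2) μ := by
  have hcont : Continuous fun z : Y => dist z y ^ 2 := by fun_prop
  refine .of_bound (hcont.comp_aestronglyMeasurable hf)
    ((r + dist P y) ^ 2) (hbound.mono fun x hx => ?_)
  rw [norm_pow, norm_eq_abs, abs_of_nonneg dist_nonneg]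
  exact pow_le_pow_left₀ dist_nonneg ((dist_triangle _ P _).trans (by linarith)) 2

theorem statement10_general (Ω : Type*) [MeasurableSpace Ω] (μ : Measure Ω)
    (hμfin : μ Set.univ < ⊤)
    (Y : Type*) [MetricSpace Y] [CompleteSpace Y] (H : CAT1Space Y)
    (P : Y) (τ : ℝ) (hτ : τ < Real.pi / 4)
    (f : Ω → Y) (hf : StronglyMeasurable f)
    (hball : ∀ᵐ x ∂μ, dist (f x) P ≤ τ)
    (Q R : Y) (hQ : dist Q P ≤ τ) (hR : dist R P ≤ τ) :
    (1 / 8) * Real.cos (2 * τ) * dist Q R ^ 2 * (μ Set.univ).toReal ≤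
      (1 / 2) * ((∫ x, dist (f x) R ^ 2 ∂μ) + (∫ x, dist (f x) Q ^ 2 ∂μ)) -
        ∫ x, dist (f x) (H.interp Q R (1 / 2)) ^ 2 ∂μ := by
  have : IsFiniteMeasure μ := ⟨hμfin⟩
  have hint := integrable_dist_sq hf.aestronglyMeasurable hball
  have hpointwise : ∀ᵐ x ∂μ, cos (2 * τ) * dist Q R ^ 2 / 8 ≤
      (dist (f x) R ^ 2 + dist (f x) Q ^ 2) / 2 - dist (f x) (H.interp Q R (1 / 2)) ^ 2 := by
    filter_upwards [hball] with x hx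
    exact H.cos_mul_sq_div_eight_le (by linarith) (by linarith [dist_triangle_right Q R P])
      (by linarith [dist_triangle R P (f x), dist_comm P (f x)])
      (by linarith [dist_triangle (f x) P Q, dist_comm P Q])
  have hsum : Integrable (fun x => (dist (f x) R ^ 2 + dist (f x) Q ^ 2) / 2) μ :=
    ((hint R).add (hint Q)).div_const 2
  have hmono := integral_mono_ae (integrable_const _) (hsum.sub (hint _)) hpointwise
  simp only [Pi.sub_apply] at hmono
  rw [integral_const, integral_sub hsum (hint _), integral_div,
    integral_add (hint R) (hint Q), smul_eq_mul, measureReal_def] at hmono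
  linarith

/-- Integrated convexity estimate used to produce the center of mass: for
`Q, R` in the closed `τ`-ball about `P` and `M` their midpoint,
`(1/8)·cos(2τ)·d(Q,R)²·μ(Ω) ≤ ½(∫d²(f,R) + ∫d²(f,Q)) − ∫d²(f,M)`. -/
theorem statement10 (Ω : Type*) [MeasurableSpace Ω] (μ : Measure Ω)
    (hμfin : μ Set.univ < ⊤)
    (Y : Type*) [MetricSpace Y] [CompleteSpace Y] (H : CAT1Space Y)
    (P : Y) (τ : ℝ) (hτ0 : 0 < τ) (hτ : τ < Real.pi / 4)
    (f : Ω → Y) (hf : StronglyMeasurable f)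
    (hball : ∀ᵐ x ∂μ, dist (f x) P ≤ τ)
    (Q R : Y) (hQ : dist Q P ≤ τ) (hR : dist R P ≤ τ) :
    (1 / 8) * Real.cos (2 * τ) * dist Q R ^ 2 * (μ Set.univ).toReal ≤
      (1 / 2) * ((∫ x, dist (f x) R ^ 2 ∂μ) + (∫ x, dist (f x) Q ^ 2 ∂μ)) -
        ∫ x, dist (f x) (H.interp Q R (1 / 2)) ^ 2 ∂μ :=
  statement10_general Ω μ hμfin Y H P τ hτ f hf hball Q R hQ hR
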